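/- If λ ∈ Γ̃_k ⊂ ℝⁿ and 1 ≤ l < k ≤ n, then S_{k-1}(λ)S_l(λ)/(C(n+1,k−1)C(n+1,l)) ≥ S_k(λ)S_{l-1}(λ)/(C(n+1,k)C(n+1,l−1)), where S_j(λ) = σ_j(λ) + α σ_{j-1}(λ) with α ≥ 0. -/

import Mathlib

open Finset

noncomputable def esym (n : ℕ) (k : ℤ) (lam : Fin n → ℝ) : ℝ :=
  if 0 ≤ k then ∑ s ∈ (Finset.univ : Finset (Fin n)).powersetCard k.toNat, ∏ i ∈ s, lam i else 0

noncomputable def esymDel (n : ℕ) (k : ℤ) (p : Fin n) (lam : Fin n → ℝ) : ℝ :=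
  if 0 ≤ k then
    ∑ s ∈ ((Finset.univ : Finset (Fin n)).erase p).powersetCard k.toNat, ∏ i ∈ s, lam i
  else 0

noncomputable def sumHess (n : ℕ) (α : ℝ) (k : ℤ) (lam : Fin n → ℝ) : ℝ :=
  esym n k lam + α * esym n (k - 1) lam

noncomputable def sumHessDel (n : ℕ) (α : ℝ) (k : ℤ) (p : Fin n) (lam : Fin n → ℝ) : ℝ :=
  esymDel n k p lam + α * esymDel n (k - 1) p lam

def Gamma (n k : ℕ) : Set (Fin n → ℝ) :=
  {lam | ∀ m : ℤ, 1 ≤ m → m ≤ (k : ℤ) → 0 < esym n m lam}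

def GammaTilde (n : ℕ) (α : ℝ) (k : ℕ) : Set (Fin n → ℝ) :=
  Gamma n (k - 1) ∩ {lam | 0 < sumHess n α (k : ℤ) lam}

noncomputable def etaMap (n : ℕ) (lam : Fin n → ℝ) : Fin n → ℝ :=
  fun i => (∑ j, lam j) - lam i

def GammaPrime (n : ℕ) (α : ℝ) (k : ℕ) : Set (Fin n → ℝ) :=
  {lam | etaMap n lam ∈ GammaTilde n α k}

/-!
Since `S_j(λ) = σ_j(λ₁, …, λₙ, α)`, the claim is a statement about the normalized elementary
symmetric means `E_j = σ_j / C(n+1, j)` of `n + 1` real numbers. These satisfy Newton's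
inequalities `E_{j-1} E_{j+1} ≤ E_j²`: by Rolle's theorem the roots of `p'`, for
`p = ∏ (X - xᵢ)`, are real and have the same means `E_j` (`j < deg p`), which reduces Newton's
inequality to the top case `j + 1 = deg p`; that case follows by induction on the number of
variables. On `Γ̃_k` the means `E_0, …, E_k` are positive, so the ratios `E_{j+1} / E_j` decrease
for `j < k`, and `E_k / E_{k-1} ≤ E_l / E_{l-1}` is the claim.
-/

open Polynomial

namespace Multiset

variable {R : Type*}

lemma esymm_cons_succ [CommSemiring R] (a : R) (s : Multiset R) (k : ℕ) :
    (a ::ₘ s).esymm (k + 1) = s.esymm (k + 1) + a * s.esymm k := by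
  simp only [esymm, powersetCard_cons, map_add, sum_add, map_map, Function.comp_def, prod_cons,
    sum_map_mul_left]

@[simp]
lemma esymm_zero [CommSemiring R] (s : Multiset R) : s.esymm 0 = 1 := by
  simp [esymm]

lemma esymm_eq_zero_of_card_lt [CommSemiring R] {s : Multiset R} {k : ℕ} (h : card s < k) :
    s.esymm k = 0 := by
  simp [esymm, powersetCard_eq_empty _ h]

noncomputable def esymmMean [Field R] (s : Multiset R) (k : ℕ) : R :=
  s.esymm k / (card s).choose k

theorem two_mul_esymm_mul_esymm_le_of_card_eq [Field R] [LinearOrder R] [IsStrictOrderedRing R]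
    (m : ℕ) (s : Multiset R) (h : card s = m + 2) :
    2 * (m + 2) * s.esymm m * s.esymm (m + 2) ≤ (m + 1) * s.esymm (m + 1) ^ 2 := by
  induction m generalizing s with
  | zero =>
    obtain ⟨a, b, rfl⟩ := card_eq_two.1 h
    simp only [zero_add, insert_eq_cons, esymm_pair_one, esymm_pair_two, esymm_zero]
    push_cast
    nlinarith [sq_nonneg (a - b)]
  | succ m ih =>
    obtain ⟨a, t, rfl, ht⟩ := card_eq_succ_iff.1 h
    have e₁ : (a ::ₘ t).esymm (m + 1) = t.esymm (m + 1) + a * t.esymm m := esymm_cons_succ ..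
    have e₂ : (a ::ₘ t).esymm (m + 2) = t.esymm (m + 2) + a * t.esymm (m + 1) :=
      esymm_cons_succ ..
    have e₃ : (a ::ₘ t).esymm (m + 3) = a * t.esymm (m + 2) := by
      rw [esymm_cons_succ, esymm_eq_zero_of_card_lt (by omega), zero_add]
    have ih := ih t ht
    rw [show m + 1 + 2 = m + 3 from rfl, show m + 1 + 1 = m + 2 from rfl, e₁, e₂, e₃]
    push_cast at ih ⊢
    have hM : (0 : R) < m + 2 := by positivity
    -- With `M = m + 2` and `A, B, C = e_{m+2}, e_{m+1}, e_m` of `t`, `M` times the gap equals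
    -- `(M A - a B)² + a² (M + 1) ((M - 1) B² - 2 M A C)`, and the last factor is `≥ 0` by `ih`.
    nlinarith [sq_nonneg ((m + 2) * t.esymm (m + 2) - a * t.esymm (m + 1)),
      mul_nonneg (sq_nonneg a) (sub_nonneg.2 ih)]

theorem esymmMean_mul_esymmMean_le_sq_of_card_eq [Field R] [LinearOrder R]
    [IsStrictOrderedRing R] (m : ℕ) (s : Multiset R) (h : card s = m + 2) :
    s.esymmMean m * s.esymmMean (m + 2) ≤ s.esymmMean (m + 1) ^ 2 := by
  have htop := two_mul_esymm_mul_esymm_le_of_card_eq m s h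
  have hchoose : ((m + 2).choose m : R) * 2 = (m + 2) * (m + 1) := by
    have h := Nat.choose_succ_right_eq (m + 2) m
    rw [Nat.choose_succ_self_right, show m + 2 - m = 2 by omega] at h
    exact_mod_cast h.symm
  have hC : (0 : R) < (m + 2).choose m := by exact_mod_cast Nat.choose_pos (by omega)
  rw [esymmMean, esymmMean, esymmMean, h, Nat.choose_self, Nat.choose_succ_self_right,
    div_mul_div_comm, div_pow, div_le_div_iff₀ (by positivity) (by positivity)]
  push_cast
  nlinarith

theorem exists_card_eq_esymmMean_eq (s : Multiset ℝ) {N : ℕ} (hs : card s = N + 1) :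
    ∃ t : Multiset ℝ, card t = N ∧ ∀ j ≤ N, t.esymmMean j = s.esymmMean j := by
  set p := (s.map fun a => X - C a).prod
  have hp_deg : p.natDegree = N + 1 := by rw [natDegree_multiset_prod_X_sub_C_eq_card, hs]
  have hp_lead : p.leadingCoeff = 1 :=
    (monic_multiset_prod_of_monic _ _ fun a _ => monic_X_sub_C a).leadingCoeff
  set q := derivative p
  have hq_deg : q.natDegree = N := by simp [q, hp_deg]
  have hq_lead : q.leadingCoeff = N + 1 := by simp [q, hp_deg, hp_lead]
  have hq_roots : card q.roots = N := by
    refine le_antisymm (hq_deg ▸ card_roots' q) ?_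
    have h := card_roots_le_derivative p
    rw [roots_multiset_prod_X_sub_C, hs] at h
    exact Nat.le_of_succ_le_succ h
  refine ⟨q.roots, hq_roots, fun j hj => ?_⟩
  have hq := coeff_eq_esymm_roots_of_card (hq_roots.trans hq_deg.symm) (k := N - j) (by omega)
  rw [coeff_derivative, prod_X_sub_C_coeff s (by omega), hq_deg, hq_lead, hs,
    show N + 1 - (N - j + 1) = j by omega, show N - (N - j) = j by omega] at hq
  have hroots : ((N : ℝ) + 1) * q.roots.esymm j = (N + 1 - j) * s.esymm j := by
    push_cast [Nat.cast_sub hj] at hq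
    apply mul_left_cancel₀ (pow_ne_zero j (by norm_num : (-1 : ℝ) ≠ 0))
    linear_combination -hq
  have hchoose : (N.choose j : ℝ) * (N + 1) = (N + 1).choose j * (N + 1 - j) := by
    have h := congrArg (Nat.cast (R := ℝ)) (Nat.choose_mul_succ_eq N j)
    push_cast [Nat.cast_sub (by omega : j ≤ N + 1)] at h
    exact h
  rw [esymmMean, esymmMean, hq_roots, hs,
    div_eq_div_iff (by exact_mod_cast (Nat.choose_pos hj).ne')
      (by exact_mod_cast (Nat.choose_pos (by omega : j ≤ N + 1)).ne')]
  apply mul_right_cancel₀ (by positivity : (N : ℝ) + 1 ≠ 0)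
  linear_combination ((N + 1).choose j : ℝ) * hroots - s.esymm j * hchoose

theorem esymmMean_mul_esymmMean_le_sq (s : Multiset ℝ) {j : ℕ} (h : j + 2 ≤ card s) :
    s.esymmMean j * s.esymmMean (j + 2) ≤ s.esymmMean (j + 1) ^ 2 := by
  obtain ⟨d, hd⟩ := Nat.exists_eq_add_of_le h
  induction d generalizing s with
  | zero => exact esymmMean_mul_esymmMean_le_sq_of_card_eq j s hd
  | succ d ih =>
    obtain ⟨t, ht, hts⟩ := exists_card_eq_esymmMean_eq s (N := j + 2 + d) hd
    rw [← hts j (by omega), ← hts (j + 1) (by omega), ← hts (j + 2) (by omega)]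
    exact ih t (by omega) ht

end Multiset

theorem mul_le_mul_of_mul_le_sq {R : Type*} [CommRing R] [LinearOrder R] [IsStrictOrderedRing R]
    {p : ℕ → R} {a b : ℕ} (hab : a ≤ b) (hpos : ∀ j, a ≤ j → j ≤ b + 1 → 0 < p j)
    (hsq : ∀ j, a ≤ j → j < b → p j * p (j + 2) ≤ p (j + 1) ^ 2) :
    p (b + 1) * p a ≤ p b * p (a + 1) := by
  induction b, hab using Nat.le_induction with
  | base => rw [mul_comm]
  | succ b hab ih =>
    have ih := ih (fun j h₁ h₂ => hpos j h₁ (by omega)) (fun j h₁ h₂ => hsq j h₁ (by omega))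
    refine le_of_mul_le_mul_left ?_ (hpos (b + 1) (by omega) (by omega))
    calc p (b + 1) * (p (b + 2) * p a) = p (b + 2) * (p (b + 1) * p a) := by ring
      _ ≤ p (b + 2) * (p b * p (a + 1)) :=
        mul_le_mul_of_nonneg_left ih (hpos _ (by omega) le_rfl).le
      _ = (p b * p (b + 2)) * p (a + 1) := by ring
      _ ≤ p (b + 1) ^ 2 * p (a + 1) :=
        mul_le_mul_of_nonneg_right (hsq b hab (by omega)) (hpos _ (by omega) (by omega)).le
      _ = p (b + 1) * (p (b + 1) * p (a + 1)) := by ring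

lemma esym_natCast (n j : ℕ) (lam : Fin n → ℝ) : esym n j lam = (univ.val.map lam).esymm j := by
  rw [esym, if_pos (Int.natCast_nonneg j), Int.toNat_natCast, Finset.esymm_map_val]

lemma sumHess_natCast (n : ℕ) (α : ℝ) (j : ℕ) (lam : Fin n → ℝ) :
    sumHess n α j lam = (α ::ₘ univ.val.map lam).esymm j := by
  cases j with
  | zero => simp [sumHess, esym]
  | succ i =>
    rw [sumHess, Multiset.esymm_cons_succ, show ((i + 1 : ℕ) : ℤ) - 1 = i by push_cast; ring,
      esym_natCast, esym_natCast]

lemma sumHess_sub_one (n : ℕ) (α : ℝ) {j : ℕ} (hj : 1 ≤ j) (lam : Fin n → ℝ) :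
    sumHess n α ((j : ℤ) - 1) lam = sumHess n α ((j - 1 : ℕ) : ℤ) lam := by
  rw [Nat.cast_sub hj, Nat.cast_one]

lemma sumHess_pos_of_mem_GammaTilde {n : ℕ} {α : ℝ} (hα : 0 ≤ α) {k : ℕ} {lam : Fin n → ℝ}
    (hlam : lam ∈ GammaTilde n α k) {j : ℕ} (hj : j ≤ k) : 0 < sumHess n α j lam := by
  obtain _ | i := j
  · rw [sumHess_natCast, Multiset.esymm_zero]; exact one_pos
  obtain hik | rfl := Nat.lt_or_eq_of_le hj
  swap
  · exact hlam.2
  have hσ : ∀ m, 1 ≤ m → m < k → 0 < (univ.val.map lam).esymm m := fun m h₁ h₂ => by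
    rw [← esym_natCast]; exact hlam.1 m (by omega) (by omega)
  have hi : 0 ≤ (univ.val.map lam).esymm i := by
    obtain _ | i := i
    · simp
    · exact (hσ _ (by omega) (by omega)).le
  rw [sumHess_natCast, Multiset.esymm_cons_succ]
  exact add_pos_of_pos_of_nonneg (hσ _ (by omega) hik) (mul_nonneg hα hi)

theorem stmt6 (n : ℕ) (α : ℝ) (hα : 0 ≤ α) (k l : ℕ) (hl : 1 ≤ l) (hlk : l < k) (hkn : k ≤ n)
    (lam : Fin n → ℝ) (hlam : lam ∈ GammaTilde n α k) :
    sumHess n α ((k : ℤ) - 1) lam * sumHess n α (l : ℤ) lam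
        / (((n + 1).choose (k - 1) : ℝ) * ((n + 1).choose l : ℝ))
      ≥ sumHess n α (k : ℤ) lam * sumHess n α ((l : ℤ) - 1) lam
        / (((n + 1).choose k : ℝ) * ((n + 1).choose (l - 1) : ℝ)) := by
  set s := α ::ₘ univ.val.map lam
  have hcard : Multiset.card s = n + 1 := by simp [s]
  have hmean_pos : ∀ j ≤ k, 0 < s.esymmMean j := fun j hj => by
    rw [Multiset.esymmMean, ← sumHess_natCast, hcard]
    exact div_pos (sumHess_pos_of_mem_GammaTilde hα hlam hj)
      (by exact_mod_cast Nat.choose_pos (by omega))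
  have hratio := mul_le_mul_of_mul_le_sq (p := s.esymmMean) (a := l - 1) (b := k - 1) (by omega)
    (fun j _ hj => hmean_pos j (by omega))
    (fun j _ hj => s.esymmMean_mul_esymmMean_le_sq (by omega))
  rw [Nat.sub_add_cancel (by omega), Nat.sub_add_cancel hl] at hratio
  rw [sumHess_sub_one n α (by omega), sumHess_sub_one n α hl, sumHess_natCast, sumHess_natCast,
    sumHess_natCast, sumHess_natCast]
  simpa only [Multiset.esymmMean, hcard, div_mul_div_comm] using hratio
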